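/- arXiv:1708.00619 — 3 statements merged into one kernel-verified Lean document; each statement's English description precedes it below -/
import Mathlib

section
/- Let x : ℝ → ℝⁿ be twice differentiable, let S : ℝ → ℝ be a twice differentiable bijection with everywhere nonzero derivative and twice differentiable inverse, and define y = x ∘ S⁻¹. If x satisfies x''(t) + φ(t) x'(t) + ∇V(x(t)) = 0 where S'' + φ S' = 0, then y satisfies y''(s) + ((S⁻¹)'(s))² ∇V(y(s)) = 0 for all s. -/
/-!
Write `τ = S⁻¹(s)` and `c = (S⁻¹)'(s)`. The chain rule gives
`y'' = (S⁻¹)''(s) • x'(τ) + c² • x''(τ)`. Differentiating `S'(S⁻¹ s) · (S⁻¹)'(s) = 1` once more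
gives `(S⁻¹)'' = -S''(τ) c³`, and the damping relation `S'' = -φ S'` turns this into
`(S⁻¹)'' = φ(τ) c²`. Substituting `x''(τ) = -φ(τ) x'(τ) - ∇V(x τ)`, the friction terms cancel
and `y'' = -c² ∇V(y)`.
-/

theorem deriv_mul_deriv_of_rightInverse {f g : ℝ → ℝ} (hfg : Function.RightInverse g f)
    {s : ℝ}
    (hf : DifferentiableAt ℝ f (g s)) (hg : DifferentiableAt ℝ g s) :
    deriv f (g s) * deriv g s = 1 := by
  have hid : f ∘ g = id := funext hfg
  rw [← deriv_comp s hf hg, hid, deriv_id]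

theorem deriv_deriv_of_rightInverse {f g : ℝ → ℝ} (hfg : Function.RightInverse g f) {s : ℝ}
    (hf : Differentiable ℝ f) (hf' : DifferentiableAt ℝ (deriv f) (g s))
    (hg : Differentiable ℝ g) (hg' : DifferentiableAt ℝ (deriv g) s) :
    deriv (deriv g) s = -deriv (deriv f) (g s) * deriv g s ^ 3 := by
  have hone : (fun t => (deriv f ∘ g) t * deriv g t) = fun _ => 1 :=
    funext fun t => deriv_mul_deriv_of_rightInverse hfg (hf _) (hg t)
  have hprod := deriv_fun_mul (hf'.comp s (hg s)) hg'
  rw [hone, deriv_const, deriv_comp s hf' (hg s), Function.comp_apply] at hprod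
  have hinv := deriv_mul_deriv_of_rightInverse hfg (hf _) (hg s)
  linear_combination (-deriv g s) * hprod - deriv (deriv g) s * hinv

theorem deriv_deriv_comp {E : Type*} [NormedAddCommGroup E] [NormedSpace ℝ E]
    {x : ℝ → E} {σ : ℝ → ℝ} {s : ℝ}
    (hx : Differentiable ℝ x) (hx' : DifferentiableAt ℝ (deriv x) (σ s))
    (hσ : Differentiable ℝ σ) (hσ' : DifferentiableAt ℝ (deriv σ) s) :
    deriv (deriv (x ∘ σ)) s =
      deriv (deriv σ) s • deriv x (σ s) + deriv σ s ^ 2 • deriv (deriv x) (σ s) := by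
  have hfirst : deriv (x ∘ σ) = fun t => deriv σ t • deriv x (σ t) :=
    funext fun t => deriv.scomp t (hx _) (hσ t)
  have hcomp : DifferentiableAt ℝ (fun t => deriv x (σ t)) s := hx'.comp s (hσ s)
  have hcomp' : deriv (fun t => deriv x (σ t)) s = deriv σ s • deriv (deriv x) (σ s) :=
    deriv.scomp s hx' (hσ s)
  rw [hfirst, deriv_fun_smul hσ' hcomp, hcomp']
  module

theorem damped_to_nonautonomous_general
    {n : ℕ} (x : ℝ → EuclideanSpace ℝ (Fin n)) (φ : ℝ → ℝ)
    (gradV : EuclideanSpace ℝ (Fin n) → EuclideanSpace ℝ (Fin n))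
    (S Sinv : ℝ → ℝ)
    (hx : ∀ t, DifferentiableAt ℝ x t)
    (hx' : ∀ t, DifferentiableAt ℝ (deriv x) t)
    (hSdiff : ∀ t, DifferentiableAt ℝ S t)
    (hSdiff' : ∀ t, DifferentiableAt ℝ (deriv S) t)
    (hSinvdiff : ∀ s, DifferentiableAt ℝ Sinv s)
    (hSinvdiff' : ∀ s, DifferentiableAt ℝ (deriv Sinv) s)
    (hright : Function.RightInverse Sinv S)
    (hSode : ∀ t, deriv (deriv S) t + φ t * deriv S t = 0)
    (heq : ∀ t, deriv (deriv x) t + φ t • deriv x t + gradV (x t) = 0)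
    (y : ℝ → EuclideanSpace ℝ (Fin n)) (hy : y = x ∘ Sinv) :
    ∀ s : ℝ, deriv (deriv y) s + (deriv Sinv s) ^ 2 • gradV (y s) = 0 := by
  intro s
  have hinv := deriv_mul_deriv_of_rightInverse hright (hSdiff (Sinv s)) (hSinvdiff s)
  have hSinv'' : deriv (deriv Sinv) s = φ (Sinv s) * deriv Sinv s ^ 2 := by
    rw [deriv_deriv_of_rightInverse hright hSdiff (hSdiff' _) hSinvdiff (hSinvdiff' s)]
    linear_combination
      (-deriv Sinv s ^ 3) * hSode (Sinv s) + φ (Sinv s) * deriv Sinv s ^ 2 * hinv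
  have hx'' : deriv (deriv x) (Sinv s) =
      -φ (Sinv s) • deriv x (Sinv s) - gradV (x (Sinv s)) := by
    rw [← sub_eq_zero, ← heq (Sinv s)]
    module
  rw [hy, deriv_deriv_comp hx (hx' _) hSinvdiff (hSinvdiff' s), hSinv'', hx'',
    Function.comp_apply]
  module

/-- a linearly damped conservative system `x'' + φ x' + ∇V(x) = 0`
becomes the nonautonomous system `y'' + ((S⁻¹)')² ∇V(y) = 0` under the time
reparametrization `s = S(t)` with `S'' + φ S' = 0`, where `y = x ∘ S⁻¹`. -/
theorem damped_to_nonautonomous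
    {n : ℕ} (x : ℝ → EuclideanSpace ℝ (Fin n)) (φ : ℝ → ℝ)
    (gradV : EuclideanSpace ℝ (Fin n) → EuclideanSpace ℝ (Fin n))
    (S Sinv : ℝ → ℝ)
    (hx : ∀ t, DifferentiableAt ℝ x t)
    (hx' : ∀ t, DifferentiableAt ℝ (deriv x) t)
    (hSdiff : ∀ t, DifferentiableAt ℝ S t)
    (hSdiff' : ∀ t, DifferentiableAt ℝ (deriv S) t)
    (hSinvdiff : ∀ s, DifferentiableAt ℝ Sinv s)
    (hSinvdiff' : ∀ s, DifferentiableAt ℝ (deriv Sinv) s)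
    (hbij : Function.Bijective S)
    (hleft : Function.LeftInverse Sinv S)
    (hright : Function.RightInverse Sinv S)
    (hS' : ∀ t, deriv S t ≠ 0)
    (hSode : ∀ t, deriv (deriv S) t + φ t * deriv S t = 0)
    (heq : ∀ t, deriv (deriv x) t + φ t • deriv x t + gradV (x t) = 0)
    (y : ℝ → EuclideanSpace ℝ (Fin n)) (hy : y = x ∘ Sinv) :
    ∀ s : ℝ, deriv (deriv y) s + (deriv Sinv s) ^ 2 • gradV (y s) = 0 :=
  damped_to_nonautonomous_general x φ gradV S Sinv hx hx' hSdiff hSdiff' hSinvdiff hSinvdiff' hright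
    hSode heq y hy
end

section
/- Let x : (0,∞) → ℝ³ be twice differentiable with x(t) ≠ 0, satisfying x''(t) + t^{-1/2} x(t)/‖x(t)‖³ = 0. Then the function I(t) = 2t (½‖x'(t)‖² - t^{-1/2}/‖x(t)‖) - ⟨x(t), x'(t)⟩ is constant. -/
/-!
For a time-dependent Kepler problem `x'' = -ω(t) x / ‖x‖³`, differentiating
`I = 2t (½‖x'‖² - ω/‖x‖) - ⟪x, x'⟫` and substituting the equation of motion
leaves only `I' = -(ω + 2tω')/‖x‖`. For `ω(t) = t^{-1/2}` the numerator
`ω + 2tω'` vanishes identically, so `I` has zero derivative on `(0, ∞)`.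
-/

open Real RealInnerProductSpace

section Kepler

variable {E : Type*} [NormedAddCommGroup E] [InnerProductSpace ℝ E]

theorem HasDerivAt.norm_of_ne_zero {x : ℝ → E} {v : E} {t : ℝ}
    (hx : HasDerivAt x v t) (hne : x t ≠ 0) :
    HasDerivAt (fun s => ‖x s‖) (⟪x t, v⟫ / ‖x t‖) t := by
  have hsqrt := (hasDerivAt_sqrt (pow_ne_zero 2 (norm_ne_zero_iff.mpr hne))).comp t hx.norm_sq
  simp only [Function.comp_def, sqrt_sq (norm_nonneg _)] at hsqrt
  exact hsqrt.congr_deriv (by field_simp)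

noncomputable def keplerNoetherIntegral (ω : ℝ → ℝ) (x : ℝ → E) (t : ℝ) : ℝ :=
  2 * t * ((1/2) * ‖deriv x t‖ ^ 2 - ω t / ‖x t‖) - ⟪x t, deriv x t⟫

theorem hasDerivAt_keplerNoetherIntegral {ω : ℝ → ℝ} {ω' : ℝ} {x : ℝ → E} {t : ℝ}
    (hω : HasDerivAt ω ω' t) (hx : DifferentiableAt ℝ x t)
    (hx' : DifferentiableAt ℝ (deriv x) t) (hne : x t ≠ 0)
    (heq : deriv (deriv x) t = -(ω t / ‖x t‖ ^ 3) • x t) :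
    HasDerivAt (keplerNoetherIntegral ω x) (-(ω t + 2 * t * ω') / ‖x t‖) t := by
  have hr : ‖x t‖ ≠ 0 := norm_ne_zero_iff.mpr hne
  refine ((((hasDerivAt_id t).const_mul 2).mul
    ((hx'.hasDerivAt.norm_sq.const_mul (1/2)).sub
      (hω.div (hx.hasDerivAt.norm_of_ne_zero hne) hr))).sub
    (hx.hasDerivAt.inner ℝ hx'.hasDerivAt)).congr_deriv ?_
  simp only [Pi.sub_apply, Pi.div_apply, id]
  rw [heq, real_inner_smul_right, real_inner_smul_right, real_inner_self_eq_norm_sq,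
    real_inner_self_eq_norm_sq, real_inner_comm (deriv x t)]
  field_simp
  ring

theorem rpow_neg_half_add_two_mul_deriv {t : ℝ} (ht : 0 < t) :
    t ^ (-(1:ℝ)/2) + 2 * t * ((-(1:ℝ)/2) * t ^ (-(1:ℝ)/2 - 1)) = 0 := by
  rw [rpow_sub ht, rpow_one]
  field_simp
  ring

theorem hasDerivAt_keplerNoetherIntegral_rpow_neg_half {x : ℝ → E} {t : ℝ} (ht : 0 < t)
    (hx : DifferentiableAt ℝ x t) (hx' : DifferentiableAt ℝ (deriv x) t) (hne : x t ≠ 0)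
    (heq : deriv (deriv x) t + (t ^ (-(1:ℝ)/2) / ‖x t‖ ^ 3) • x t = 0) :
    HasDerivAt (keplerNoetherIntegral (· ^ (-(1:ℝ)/2)) x) 0 t := by
  have hω : HasDerivAt (· ^ (-(1:ℝ)/2)) ((-(1:ℝ)/2) * t ^ (-(1:ℝ)/2 - 1)) t :=
    hasDerivAt_rpow_const (Or.inl ht.ne')
  convert hasDerivAt_keplerNoetherIntegral hω hx hx' hne
    (by rw [neg_smul, ← add_eq_zero_iff_eq_neg, heq]) using 1
  rw [rpow_neg_half_add_two_mul_deriv ht, neg_zero, zero_div]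

end Kepler

/-- the Noether first integral
`I t = 2t (½‖x'‖² - t^{-1/2}/‖x‖) - ⟪x, x'⟫` of the time-dependent Kepler
problem with `ω(t) = t^{-1/2}` is constant on `(0,∞)`. -/
theorem kepler_noether_integral
    (x : ℝ → EuclideanSpace ℝ (Fin 3))
    (hx : ∀ t > (0:ℝ), DifferentiableAt ℝ x t)
    (hx' : ∀ t > (0:ℝ), DifferentiableAt ℝ (deriv x) t)
    (hne : ∀ t > (0:ℝ), x t ≠ 0)
    (heq : ∀ t > (0:ℝ),
      deriv (deriv x) t + (t ^ (-(1:ℝ)/2) / ‖x t‖ ^ 3) • x t = 0)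
    (I : ℝ → ℝ)
    (hI : ∀ t, I t = 2 * t * ((1/2) * ‖deriv x t‖ ^ 2 - t ^ (-(1:ℝ)/2) / ‖x t‖)
        - ⟪x t, deriv x t⟫) :
    ∀ t₁ > (0:ℝ), ∀ t₂ > (0:ℝ), I t₁ = I t₂ := by
  have hderiv : ∀ t > (0:ℝ), HasDerivAt (keplerNoetherIntegral (· ^ (-(1:ℝ)/2)) x) 0 t := fun t ht =>
    hasDerivAt_keplerNoetherIntegral_rpow_neg_half ht (hx t ht) (hx' t ht) (hne t ht) (heq t ht)
  intro t₁ ht₁ t₂ ht₂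
  rw [show I = keplerNoetherIntegral (· ^ (-(1:ℝ)/2)) x from funext hI]
  exact isOpen_Ioi.is_const_of_deriv_eq_zero isPreconnected_Ioi
    (fun t ht => (hderiv t ht).differentiableAt.differentiableWithinAt)
    (fun t ht => (hderiv t ht).deriv) ht₁ ht₂
end

section
/- Let ω(t) = 1/(d₁t + d₂)² on an interval where d₁t + d₂ > 0, and let V : ℝⁿ → ℝ be any smooth function. If x(t) solves x''(t) + ω(t)∇V(x(t)) = 0, then for every ε, the curve y(t) = x(ψ_ε(t)), where ψ_ε is the flow of the vector field (d₁t + d₂)∂_t, i.e. ψ_ε(t) = (e^{d₁ε}(d₁t + d₂) - d₂)/d₁ for d₁ ≠ 0, also solves y''(t) + ω(t)∇V(y(t)) = 0. -/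
/-- Case I.1 of Theorem 1: for `ω t = 1/(d₁t+d₂)²`, the flow
`ψ_ε t = (e^{d₁ε}(d₁t+d₂) - d₂)/d₁` of the vector field `(d₁t+d₂)∂_t` maps
solutions of `x'' + ω ∇V(x) = 0` to solutions. -/
theorem caseI1_time_symmetry
    {n : ℕ} (d₁ d₂ : ℝ) (hd₁ : d₁ ≠ 0)
    (ω : ℝ → ℝ) (hω : ∀ t, ω t = 1 / (d₁ * t + d₂) ^ 2)
    (V : EuclideanSpace ℝ (Fin n) → ℝ) (hV : ContDiff ℝ (⊤ : ℕ∞) V)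
    (x : ℝ → EuclideanSpace ℝ (Fin n))
    (hx : ∀ t, DifferentiableAt ℝ x t)
    (hx' : ∀ t, DifferentiableAt ℝ (deriv x) t)
    (heq : ∀ t, d₁ * t + d₂ > 0 →
      deriv (deriv x) t + ω t • gradient V (x t) = 0) :
    ∀ ε : ℝ, ∀ ψ : ℝ → ℝ,
      (∀ t, ψ t = (Real.exp (d₁ * ε) * (d₁ * t + d₂) - d₂) / d₁) →
      ∀ y : ℝ → EuclideanSpace ℝ (Fin n), (∀ t, y t = x (ψ t)) →
      ∀ t, d₁ * t + d₂ > 0 →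
        deriv (deriv y) t + ω t • gradient V (y t) = 0 := by
  intro ε ψ hψ y hy t ht
  set c := Real.exp (d₁ * ε) with hc
  have hcpos : 0 < c := Real.exp_pos _
  set b := (c * d₂ - d₂) / d₁ with hb
  have hψeq : ∀ s, ψ s = c * s + b := by
    intro s; rw [hψ s, hb]; field_simp; ring
  have hyeq : y = fun s => x (c * s + b) := by
    funext s; rw [hy s, hψeq s]
  have haff : ∀ s : ℝ, HasDerivAt (fun u : ℝ => c * u + b) c s := by
    intro s
    simpa using ((hasDerivAt_id s).const_mul c).add_const b
  have hderiv : deriv y = fun s => c • deriv x (c * s + b) := by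
    funext s
    rw [hyeq]
    have h := ((hx (c * s + b)).hasDerivAt.scomp s (haff s))
    simpa [Function.comp_def] using h.deriv
  have hderiv2 : deriv (deriv y) t = (c * c) • deriv (deriv x) (c * t + b) := by
    rw [hderiv]
    have h1 : HasDerivAt (fun s => deriv x (c * s + b))
        (c • deriv (deriv x) (c * t + b)) t :=
      by have := (hx' (c * t + b)).hasDerivAt.scomp t (haff t); exact this
    have h2 : HasDerivAt (fun s => c • deriv x (c * s + b)) (c • c • deriv (deriv x) (c * t + b)) t := h1.const_smul c
    simpa [smul_smul, mul_comm] using h2.deriv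
  have h3 : d₁ * (c * t + b) + d₂ = c * (d₁ * t + d₂) := by
    rw [hb]; field_simp; ring
  have hpos : d₁ * (c * t + b) + d₂ > 0 := by
    rw [h3]; positivity
  have key := heq (c * t + b) hpos
  have hω1 : (c * c) * ω (c * t + b) = ω t := by
    rw [hω, hω, h3]
    have hne : d₁ * t + d₂ ≠ 0 := ne_of_gt ht
    field_simp
  have hxx : deriv (deriv x) (c * t + b)
      = -(ω (c * t + b) • gradient V (x (c * t + b))) :=
    eq_neg_of_add_eq_zero_left key
  rw [hderiv2, hy t, hψeq t, hxx, smul_neg, smul_smul, hω1]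
  exact neg_add_cancel _
end
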